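/- Let (H,𝓕_A,𝓕_G) be a GR(1) game with 𝓕_A = {F_A¹,…,F_Aᵐ} and 𝓕_G = {F_G¹,…,F_Gⁿ}, let q ∈ Z̄^∞ = Q∖⟦φ₄ᵛ⟧, and let f¹ be a system strategy over H such that ∅ ≠ L_q(H,f¹) ⊆ L̄_q(H,𝓕_A) ∪ L_q(H,𝓕_G). Then Pre(L_q(H,f¹)) ≠ Pre(L_q(H,f¹) ∩ L_q(H,𝓕_A)); that is, f¹ is conflicting from q. -/
import Mathlib


namespace GR1

/-- A two-player game graph `H = ⟨Q⁰, Q¹, δ⁰, δ¹, q₀⟩`.  `env` is the set `Q⁰` of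
environment states, `sys` the set `Q¹` of system states, and `delta` combines the
transition functions `δ⁰` and `δ¹`. -/
structure GameGraph (Q : Type*) where
  env : Set Q
  sys : Set Q
  delta : Q → Set Q
  disjoint_env_sys : Disjoint env sys
  union_env_sys : env ∪ sys = Set.univ
  delta_env : ∀ q ∈ env, delta q ⊆ sys
  delta_sys : ∀ q ∈ sys, delta q ⊆ env
  delta_nonempty : ∀ q, (delta q).Nonempty
  init : Q
  init_env : init ∈ env

namespace GameGraph

/-- The existential predecessor operator `Pre∃`. -/
def PreE {Q : Type*} (G : GameGraph Q) (P : Set Q) : Set Q :=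
  {q | (G.delta q ∩ P).Nonempty}

/-- The universal predecessor operator `Pre∀`. -/
def PreA {Q : Type*} (G : GameGraph Q) (P : Set Q) : Set Q :=
  {q | G.delta q ⊆ P}

/-- The player-0 (environment) controllable predecessor operator `Pre⁰`. -/
def Pre0 {Q : Type*} (G : GameGraph Q) (P : Set Q) : Set Q :=
  {q | q ∈ G.env ∧ (G.delta q ∩ P).Nonempty} ∪ {q | q ∈ G.sys ∧ G.delta q ⊆ P}

/-- The player-1 (system) controllable predecessor operator `Pre¹`. -/
def Pre1 {Q : Type*} (G : GameGraph Q) (P : Set Q) : Set Q :=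
  {q | q ∈ G.env ∧ G.delta q ⊆ P} ∪ {q | q ∈ G.sys ∧ (G.delta q ∩ P).Nonempty}

/-- The conditional predecessor `Precond(P,P') = Pre∃(P) ∩ Pre¹(P ∪ P')`. -/
def Precond {Q : Type*} (G : GameGraph Q) (P P' : Set Q) : Set Q :=
  G.PreE P ∩ G.Pre1 (P ∪ P')

/-- The dual conditional predecessor `Precondᶜ(P,P') = Pre∀(P) ∪ Pre⁰(P ∩ P')`. -/
def PrecondC {Q : Type*} (G : GameGraph Q) (P P' : Set Q) : Set Q :=
  G.PreA P ∪ G.Pre0 (P ∩ P')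

end GameGraph

/-- Knaster–Tarski least fixed point over the powerset lattice. -/
def lfpSet {Q : Type*} (F : Set Q → Set Q) : Set Q := ⋂₀ {S | F S ⊆ S}

/-- Knaster–Tarski greatest fixed point over the powerset lattice. -/
def gfpSet {Q : Type*} (F : Set Q → Set Q) : Set Q := ⋃₀ {S | S ⊆ F S}

/-- Knaster–Tarski least fixed point over the lattice of vectors of sets. -/
def lfpVec {Q : Type*} {n : ℕ} (F : (Fin n → Set Q) → (Fin n → Set Q)) : Fin n → Set Q :=
  fun a => ⋂ V ∈ {V : Fin n → Set Q | ∀ a', F V a' ⊆ V a'}, V a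

/-- Knaster–Tarski greatest fixed point over the lattice of vectors of sets. -/
def gfpVec {Q : Type*} {n : ℕ} (F : (Fin n → Set Q) → (Fin n → Set Q)) : Fin n → Set Q :=
  fun a => ⋃ V ∈ {V : Fin n → Set Q | ∀ a', V a' ⊆ F V a'}, V a

/-- Cyclic successor of a mode: `a⁺ = (a mod n) + 1` in 1-based counting. -/
def modeSucc {n : ℕ} (a : Fin n) : Fin n :=
  ⟨(a.val + 1) % n, Nat.mod_lt _ a.pos⟩

/-- `π` is an (infinite) play over `G` starting in the state `q`. -/
def IsPlayFrom {Q : Type*} (G : GameGraph Q) (q : Q) (π : ℕ → Q) : Prop :=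
  π 0 = q ∧ ∀ k, π (k + 1) ∈ G.delta (π k)

/-- `Inf(π) ∩ F ≠ ∅` : the play `π` visits the set `F` infinitely often. -/
def InfOft {Q : Type*} (π : ℕ → Q) (F : Set Q) : Prop := ∀ n, ∃ k, n ≤ k ∧ π k ∈ F

/-- `L_q(H,F)` : plays from `q` satisfying the Büchi condition `F`. -/
def LBuchi {Q : Type*} (G : GameGraph Q) (q : Q) (F : Set Q) : Set (ℕ → Q) :=
  {π | IsPlayFrom G q π ∧ InfOft π F}

/-- `L_q(H,𝓕)` : plays from `q` satisfying the generalized Büchi condition `𝓕`. -/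
def LGenBuchi {Q ι : Type*} (G : GameGraph Q) (q : Q) (F : ι → Set Q) : Set (ℕ → Q) :=
  {π | IsPlayFrom G q π ∧ ∀ i, InfOft π (F i)}

/-- `Pre(L)` : the set of all finite prefixes of the (infinite) words in `L`. -/
def prefixes {Q : Type*} (L : Set (ℕ → Q)) : Set (List Q) :=
  {w | ∃ π ∈ L, ∃ k, w = (List.range k).map π}

/-- A (history dependent) system strategy: on a history ending in a system state it
produces a `δ¹`-successor of that state. -/
def IsSysStrategy {Q : Type*} (G : GameGraph Q) (f : List Q → Q) : Prop :=
  ∀ (w : List Q) (q : Q), q ∈ G.sys → f (w ++ [q]) ∈ G.delta q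

/-- The finite history `π|_{[0,k]}` of a play. -/
def histUpTo {Q : Type*} (π : ℕ → Q) (k : ℕ) : List Q := (List.range (k + 1)).map π

/-- `L_q(H,f¹)` : plays from `q` compliant with the system strategy `f¹`. -/
def Lstrat {Q : Type*} (G : GameGraph Q) (q : Q) (f : List Q → Q) : Set (ℕ → Q) :=
  {π | IsPlayFrom G q π ∧ ∀ k, π k ∈ G.sys → π (k + 1) = f (histUpTo π k)}

/-- `L_q(H,f¹)` for a memoryless system strategy `f¹ : Q → Q`. -/
def Lmem {Q : Type*} (G : GameGraph Q) (q : Q) (f : Q → Q) : Set (ℕ → Q) :=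
  {π | IsPlayFrom G q π ∧ ∀ k, π k ∈ G.sys → π (k + 1) = f (π k)}

/-- Strict lexicographic order on ranks. -/
def rankLt (p r : ℕ × ℕ) : Prop := p.1 < r.1 ∨ (p.1 = r.1 ∧ p.2 < r.2)

/-- Lexicographic order on ranks. -/
def rankLe (p r : ℕ × ℕ) : Prop := p.1 < r.1 ∨ (p.1 = r.1 ∧ p.2 ≤ r.2)

/-! ### The 4-nested fixed point `φ₄` for singleton winning conditions -/

/-- The body `(F_G ∩ Pre¹(Z)) ∪ Pre¹(Y) ∪ ((Q∖F_A) ∩ Precond(W, X∖F_A))`. -/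
def body {Q : Type*} (G : GameGraph Q) (FA FG Z Y X W : Set Q) : Set Q :=
  (FG ∩ G.Pre1 Z) ∪ G.Pre1 Y ∪ (FAᶜ ∩ G.Precond W (X \ FA))

def innerW {Q : Type*} (G : GameGraph Q) (FA FG Z Y X : Set Q) : Set Q :=
  lfpSet (fun W => body G FA FG Z Y X W)

def innerX {Q : Type*} (G : GameGraph Q) (FA FG Z Y : Set Q) : Set Q :=
  gfpSet (fun X => innerW G FA FG Z Y X)

def innerY {Q : Type*} (G : GameGraph Q) (FA FG Z : Set Q) : Set Q :=
  lfpSet (fun Y => innerX G FA FG Z Y)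

/-- `⟦φ₄⟧ = Z^∞` : the value of `νZ.μY.νX.μW. (F_G ∩ Pre¹(Z)) ∪ Pre¹(Y) ∪
((Q∖F_A) ∩ Precond(W, X∖F_A))`. -/
def phi4 {Q : Type*} (G : GameGraph Q) (FA FG : Set Q) : Set Q :=
  gfpSet (fun Z => innerY G FA FG Z)

/-- The approximants `Yⁱ` of `Y` in the terminal iteration over `Z` (`Y⁰ = ∅`). -/
def Yapprox {Q : Type*} (G : GameGraph Q) (FA FG : Set Q) : ℕ → Set Q
  | 0 => ∅
  | i + 1 => innerX G FA FG (phi4 G FA FG) (Yapprox G FA FG i)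

/-- The approximants `Wⁱ_j` of `W` computed with `X = Xⁱ = Yⁱ` and `Y = Yⁱ⁻¹`. -/
def Wapprox {Q : Type*} (G : GameGraph Q) (FA FG : Set Q) (i : ℕ) : ℕ → Set Q
  | 0 => ∅
  | j + 1 =>
      body G FA FG (phi4 G FA FG) (Yapprox G FA FG (i - 1)) (Yapprox G FA FG i)
        (Wapprox G FA FG i j)

/-- `rank(q) = (i,j)` iff `q ∈ (Yⁱ∖Yⁱ⁻¹) ∩ (Wⁱ_j∖Wⁱ_{j−1})` with `i,j > 0`. -/
def hasRank {Q : Type*} (G : GameGraph Q) (FA FG : Set Q) (q : Q) (i j : ℕ) : Prop :=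
  0 < i ∧ 0 < j ∧
    q ∈ (Yapprox G FA FG i \ Yapprox G FA FG (i - 1)) ∩
        (Wapprox G FA FG i j \ Wapprox G FA FG i (j - 1))

/-- The memoryless system strategy extracted from the ranking: `f¹(q) ∈ δ¹(q)`,
`rank(f¹(q)) < rank(q)` whenever `rank(q) > (1,1)`, and `f¹(q) ∈ Z^∞` otherwise. -/
def GoodStrategy {Q : Type*} (G : GameGraph Q) (FA FG : Set Q) (f : Q → Q) : Prop :=
  ∀ q, q ∈ G.sys → q ∈ phi4 G FA FG →
    f q ∈ G.delta q ∧
      ∀ i j, hasRank G FA FG q i j →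
        (((i, j) = ((1 : ℕ), (1 : ℕ)) → f q ∈ phi4 G FA FG) ∧
          ((i, j) ≠ ((1 : ℕ), (1 : ℕ)) →
            ∃ i' j', hasRank G FA FG (f q) i' j' ∧ rankLt (i', j') (i, j)))

/-! ### The negated fixed point `φ̄₄` (singleton conditions) -/

/-- The simplified negated body
`Pre⁰(Z̄) ∪ ((Q∖F_G) ∩ F_A ∩ Pre⁰(Ȳ)) ∪ ((Q∖F_G) ∩ Precondᶜ(W̄, X̄ ∪ F_A))`. -/
def nbody {Q : Type*} (G : GameGraph Q) (FA FG Z Y X W : Set Q) : Set Q :=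
  G.Pre0 Z ∪ (FGᶜ ∩ FA ∩ G.Pre0 Y) ∪ (FGᶜ ∩ G.PrecondC W (X ∪ FA))

/-- The simplified negated fixed point `φ̄₄ = μZ̄.νȲ.μX̄.νW̄. nbody`. -/
def phi4neg {Q : Type*} (G : GameGraph Q) (FA FG : Set Q) : Set Q :=
  lfpSet (fun Z => gfpSet (fun Y => lfpSet (fun X => gfpSet (fun W =>
    nbody G FA FG Z Y X W))))

/-- The unsimplified negation body
`((Q∖F_G) ∪ Pre⁰(Z̄)) ∩ Pre⁰(Ȳ) ∩ (F_A ∪ Precondᶜ(W̄, X̄ ∪ F_A))`. -/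
def nbodyRaw {Q : Type*} (G : GameGraph Q) (FA FG Z Y X W : Set Q) : Set Q :=
  (FGᶜ ∪ G.Pre0 Z) ∩ G.Pre0 Y ∩ (FA ∪ G.PrecondC W (X ∪ FA))

/-- The unsimplified negated fixed point. -/
def phi4negRaw {Q : Type*} (G : GameGraph Q) (FA FG : Set Q) : Set Q :=
  lfpSet (fun Z => gfpSet (fun Y => lfpSet (fun X => gfpSet (fun W =>
    nbodyRaw G FA FG Z Y X W))))

/-- The approximants `Z̄ⁱ` of the negated fixed point (`Z̄⁰ = ∅`). -/
def Zbar {Q : Type*} (G : GameGraph Q) (FA FG : Set Q) : ℕ → Set Q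
  | 0 => ∅
  | i + 1 =>
      gfpSet (fun Y => lfpSet (fun X => gfpSet (fun W =>
        nbody G FA FG (Zbar G FA FG i) Y X W)))

/-- The approximants `X̄ⁱ_j` of `X̄` computed while computing `Z̄ⁱ` (using `Ȳ = Z̄ⁱ` and
`Z̄ = Z̄ⁱ⁻¹`), with `X̄ⁱ₀ = ∅`. -/
def Xbar {Q : Type*} (G : GameGraph Q) (FA FG : Set Q) (i : ℕ) : ℕ → Set Q
  | 0 => ∅
  | j + 1 =>
      gfpSet (fun W =>
        nbody G FA FG (Zbar G FA FG (i - 1)) (Zbar G FA FG i) (Xbar G FA FG i j) W)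

/-- The negated rank: `rank(q) = (i,j)` iff `q ∈ X̄ⁱ_j ∖ X̄ⁱ_{j−1}` with `i,j > 0`. -/
def nrank {Q : Type*} (G : GameGraph Q) (FA FG : Set Q) (q : Q) (i j : ℕ) : Prop :=
  0 < i ∧ 0 < j ∧ q ∈ Xbar G FA FG i j \ Xbar G FA FG i (j - 1)

/-- Environment moves permitted during the inductive construction of the reachable
region `R_{f¹}` (cases (a'), (b'), (c'2), (c'3) and the remaining case (c'1)). -/
def envStep {Q : Type*} (G : GameGraph Q) (FA FG : Set Q) (q' q'' : Q) : Prop :=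
  q'' ∈ G.delta q' ∧
    ∃ i j, nrank G FA FG q' i j ∧
      ((q'' ∈ (phi4 G FA FG)ᶜ ∧ ∃ i' j', nrank G FA FG q'' i' j' ∧ i' ≤ i - 1) ∨
       (q' ∈ FA \ FG ∧ q'' ∈ (phi4 G FA FG)ᶜ ∧
          ∃ i' j', nrank G FA FG q'' i' j' ∧ i' ≤ i) ∨
       (q'' ∈ (phi4 G FA FG)ᶜ ∧
          ∃ i' j', nrank G FA FG q'' i' j' ∧ rankLe (i', j') (i, j - 1)) ∨
       (q'' ∈ (phi4 G FA FG)ᶜ ∧ q'' ∈ FA ∧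
          ∃ i' j', nrank G FA FG q'' i' j' ∧ rankLe (i', j') (i, j)) ∨
       (∀ p ∈ G.delta q', p ∈ (phi4 G FA FG)ᶜ ∧
          ∃ i' j', nrank G FA FG p i' j' ∧ rankLe (i', j') (i, j)))

/-- `L_q(H,f¹,R_{f¹})` : plays from `q` compliant with `f¹` that remain within the
reachable region `R_{f¹}`, i.e. in which every environment move follows the rules of
the inductive construction of `R_{f¹}`. -/
def Lrestr {Q : Type*} (G : GameGraph Q) (FA FG : Set Q) (q : Q) (f : List Q → Q) :
    Set (ℕ → Q) :=
  {π | π ∈ Lstrat G q f ∧ ∀ k, π k ∈ G.env → envStep G FA FG (π k) (π (k + 1))}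

/-! ### The vectorized fixed point `φ₄ᵛ` for general GR(1) conditions -/

/-- The body `Ω^{ab}` of the vectorized fixed point. -/
def bodyV {Q : Type*} {n m : ℕ} (G : GameGraph Q) (FAv : Fin m → Set Q)
    (FGv : Fin n → Set Q) (Zv : Fin n → Set Q) (a : Fin n) (b : Fin m)
    (Y X W : Set Q) : Set Q :=
  (FGv a ∩ G.Pre1 (Zv (modeSucc a))) ∪ G.Pre1 Y ∪ ((FAv b)ᶜ ∩ G.Precond W (X \ FAv b))

def innerWV {Q : Type*} {n m : ℕ} (G : GameGraph Q) (FAv : Fin m → Set Q)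
    (FGv : Fin n → Set Q) (Zv : Fin n → Set Q) (a : Fin n) (b : Fin m)
    (Y X : Set Q) : Set Q :=
  lfpSet (fun W => bodyV G FAv FGv Zv a b Y X W)

def innerXV {Q : Type*} {n m : ℕ} (G : GameGraph Q) (FAv : Fin m → Set Q)
    (FGv : Fin n → Set Q) (Zv : Fin n → Set Q) (a : Fin n) (b : Fin m)
    (Y : Set Q) : Set Q :=
  gfpSet (fun X => innerWV G FAv FGv Zv a b Y X)

/-- The vector `[Z¹,…,Zⁿ]` of the vectorized fixed point `φ₄ᵛ`. -/
def phi4v {Q : Type*} {n m : ℕ} (G : GameGraph Q) (FAv : Fin m → Set Q)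
    (FGv : Fin n → Set Q) : Fin n → Set Q :=
  gfpVec (fun Zv a => lfpSet (fun Y => ⋃ b, innerXV G FAv FGv Zv a b Y))

/-- `⟦φ₄ᵛ⟧ = Z^∞ = ⋃_a Zᵃ^∞`. -/
def phi4vSem {Q : Type*} {n m : ℕ} (G : GameGraph Q) (FAv : Fin m → Set Q)
    (FGv : Fin n → Set Q) : Set Q :=
  ⋃ a, phi4v G FAv FGv a

/-- The approximants `ᵃYⁱ` (with `ᵃY⁰ = ∅`) of `Yᵃ` in the terminal iteration. -/
def YapproxV {Q : Type*} {n m : ℕ} (G : GameGraph Q) (FAv : Fin m → Set Q)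
    (FGv : Fin n → Set Q) (a : Fin n) : ℕ → Set Q
  | 0 => ∅
  | i + 1 => ⋃ b, innerXV G FAv FGv (phi4v G FAv FGv) a b (YapproxV G FAv FGv a i)

/-- The fixed point `ᵃᵇXⁱ` of `X^{ab}` computed during the `i`-th iteration. -/
def XfixV {Q : Type*} {n m : ℕ} (G : GameGraph Q) (FAv : Fin m → Set Q)
    (FGv : Fin n → Set Q) (a : Fin n) (b : Fin m) (i : ℕ) : Set Q :=
  innerXV G FAv FGv (phi4v G FAv FGv) a b (YapproxV G FAv FGv a (i - 1))

/-- The approximants `ᵃᵇWⁱ_j` of `W^{ab}` computed while computing `ᵃYⁱ`. -/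
def WapproxV {Q : Type*} {n m : ℕ} (G : GameGraph Q) (FAv : Fin m → Set Q)
    (FGv : Fin n → Set Q) (a : Fin n) (b : Fin m) (i : ℕ) : ℕ → Set Q
  | 0 => ∅
  | j + 1 =>
      bodyV G FAv FGv (phi4v G FAv FGv) a b (YapproxV G FAv FGv a (i - 1))
        (XfixV G FAv FGv a b i) (WapproxV G FAv FGv a b i j)

/-- The mode-based rank: `ᵃᵇrank(q) = (i,j)` iff
`q ∈ (ᵃYⁱ∖ᵃYⁱ⁻¹) ∩ (ᵃᵇWⁱ_j∖ᵃᵇWⁱ_{j−1})` with `i,j > 0`. -/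
def hasRankV {Q : Type*} {n m : ℕ} (G : GameGraph Q) (FAv : Fin m → Set Q)
    (FGv : Fin n → Set Q) (a : Fin n) (b : Fin m) (q : Q) (i j : ℕ) : Prop :=
  0 < i ∧ 0 < j ∧
    q ∈ (YapproxV G FAv FGv a i \ YapproxV G FAv FGv a (i - 1)) ∩
        (WapproxV G FAv FGv a b i j \ WapproxV G FAv FGv a b i (j - 1))

/-- The finite-memory system strategy extracted from the mode-based ranking. -/
def GoodStrategyV {Q : Type*} {n m : ℕ} (G : GameGraph Q) (FAv : Fin m → Set Q)
    (FGv : Fin n → Set Q) (f : Q × Fin n × Fin m → Q × Fin n × Fin m) : Prop :=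
  ∀ (q : Q) (a : Fin n) (b : Fin m), q ∈ G.sys → q ∈ phi4v G FAv FGv a →
    (f (q, a, b)).1 ∈ G.delta q ∧
      ∀ i j, hasRankV G FAv FGv a b q i j →
        (((i, j) = ((1 : ℕ), (1 : ℕ)) →
            (f (q, a, b)).1 ∈ phi4v G FAv FGv (modeSucc a) ∧
              (f (q, a, b)).2.1 = modeSucc a) ∧
          (1 < i ∧ j = 1 →
            (f (q, a, b)).2.1 = a ∧
              ∃ i' j',
                hasRankV G FAv FGv a ((f (q, a, b)).2.2) ((f (q, a, b)).1) i' j' ∧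
                  i' ≤ i - 1) ∧
          (1 < j →
            (f (q, a, b)).2.1 = a ∧ (f (q, a, b)).2.2 = b ∧
              ∃ i' j',
                hasRankV G FAv FGv a b ((f (q, a, b)).1) i' j' ∧
                  rankLe (i', j') (i, j - 1)))

/-- Compliance of a play with a finite-memory strategy via mode traces `α`, `β`. -/
def CompliantModeV {Q : Type*} {n m : ℕ} (G : GameGraph Q) (FAv : Fin m → Set Q)
    (FGv : Fin n → Set Q) (f : Q × Fin n × Fin m → Q × Fin n × Fin m)
    (π : ℕ → Q) (α : ℕ → Fin n) (β : ℕ → Fin m) : Prop :=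
  ∀ k,
    (π k ∈ G.sys → (π (k + 1), α (k + 1), β (k + 1)) = f (π k, α k, β k)) ∧
      (π k ∈ G.env →
        (hasRankV G FAv FGv (α k) (β k) (π (k + 1)) 1 1 →
            α (k + 1) = modeSucc (α k)) ∧
          ((∃ i, 1 < i ∧ hasRankV G FAv FGv (α k) (β k) (π (k + 1)) i 1) →
            α (k + 1) = α k) ∧
          ((∃ i j, 1 < j ∧ hasRankV G FAv FGv (α k) (β k) (π (k + 1)) i j) →
            α (k + 1) = α k ∧ β (k + 1) = β k))

/-- `L_q(H,f¹)` for a finite-memory strategy: plays from `q` compliant with `f¹`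
for some mode traces. -/
def LmodeV {Q : Type*} {n m : ℕ} (G : GameGraph Q) (FAv : Fin m → Set Q)
    (FGv : Fin n → Set Q) (q : Q) (f : Q × Fin n × Fin m → Q × Fin n × Fin m) :
    Set (ℕ → Q) :=
  {π | IsPlayFrom G q π ∧ ∃ α β, CompliantModeV G FAv FGv f π α β}

/-- `ᵃD = F_Gᵃ ∩ Pre¹(Z^{a⁺,∞})`. -/
def DsetV {Q : Type*} {n m : ℕ} (G : GameGraph Q) (FAv : Fin m → Set Q)
    (FGv : Fin n → Set Q) (a : Fin n) : Set Q :=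
  FGv a ∩ G.Pre1 (phi4v G FAv FGv (modeSucc a))

/-- `ᵃEⁱ = Pre¹(ᵃYⁱ⁻¹) ∖ ᵃYⁱ⁻¹`. -/
def EsetV {Q : Type*} {n m : ℕ} (G : GameGraph Q) (FAv : Fin m → Set Q)
    (FGv : Fin n → Set Q) (a : Fin n) (i : ℕ) : Set Q :=
  G.Pre1 (YapproxV G FAv FGv a (i - 1)) \ YapproxV G FAv FGv a (i - 1)

/-- `ᵃᵇΘⁱ_j = (Q∖F_Aᵇ) ∩ Precond(ᵃᵇWⁱ_{j−1}, ᵃᵇXⁱ∖F_Aᵇ)`. -/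
def ThetaV {Q : Type*} {n m : ℕ} (G : GameGraph Q) (FAv : Fin m → Set Q)
    (FGv : Fin n → Set Q) (a : Fin n) (b : Fin m) (i j : ℕ) : Set Q :=
  (FAv b)ᶜ ∩ G.Precond (WapproxV G FAv FGv a b i (j - 1)) (XfixV G FAv FGv a b i \ FAv b)

/-- `ᵃᵇRⁱ_j = ᵃᵇΘⁱ_j ∖ (ᵃᵇWⁱ_{j−1} ∪ ᵃYⁱ⁻¹ ∪ ᵃEⁱ ∪ ᵃD)`. -/
def RsetV {Q : Type*} {n m : ℕ} (G : GameGraph Q) (FAv : Fin m → Set Q)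
    (FGv : Fin n → Set Q) (a : Fin n) (b : Fin m) (i j : ℕ) : Set Q :=
  ThetaV G FAv FGv a b i j \
    (WapproxV G FAv FGv a b i (j - 1) ∪ YapproxV G FAv FGv a (i - 1) ∪
      EsetV G FAv FGv a i ∪ DsetV G FAv FGv a)

/-! ### The negated vectorized fixed point -/

/-- The body of the negated vectorized fixed point. -/
def nbodyV {Q : Type*} {n m : ℕ} (G : GameGraph Q) (FAv : Fin m → Set Q)
    (FGv : Fin n → Set Q) (Zv : Fin n → Set Q) (a : Fin n) (b : Fin m)
    (Y X W : Set Q) : Set Q :=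
  G.Pre0 (Zv (modeSucc a)) ∪ ((FGv a)ᶜ ∩ FAv b ∩ G.Pre0 Y) ∪
    ((FGv a)ᶜ ∩ G.PrecondC W (X ∪ FAv b))

/-- The coordinated approximants `Z̄ᵃⁱ` of the negated vectorized fixed point. -/
def ZbarV {Q : Type*} {n m : ℕ} (G : GameGraph Q) (FAv : Fin m → Set Q)
    (FGv : Fin n → Set Q) : ℕ → Fin n → Set Q
  | 0 => fun _ => ∅
  | i + 1 => fun a =>
      gfpSet (fun Y => ⋂ b, lfpSet (fun X => gfpSet (fun W =>
        nbodyV G FAv FGv (ZbarV G FAv FGv i) a b Y X W)))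

/-- The approximants `X̄^{ab,i}_j` of `X̄^{ab}` computed during the `i`-th iteration. -/
def XbarV {Q : Type*} {n m : ℕ} (G : GameGraph Q) (FAv : Fin m → Set Q)
    (FGv : Fin n → Set Q) (a : Fin n) (b : Fin m) (i : ℕ) : ℕ → Set Q
  | 0 => ∅
  | j + 1 =>
      gfpSet (fun W =>
        nbodyV G FAv FGv (ZbarV G FAv FGv (i - 1)) a b (ZbarV G FAv FGv i a)
          (XbarV G FAv FGv a b i j) W)

/-- The negated mode-based rank: `ᵃᵇrank(q) = (i,j)` iff `q ∈ X̄^{ab,i}_j∖X̄^{ab,i}_{j−1}`. -/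
def nrankV {Q : Type*} {n m : ℕ} (G : GameGraph Q) (FAv : Fin m → Set Q)
    (FGv : Fin n → Set Q) (a : Fin n) (b : Fin m) (q : Q) (i j : ℕ) : Prop :=
  0 < i ∧ 0 < j ∧ q ∈ XbarV G FAv FGv a b i j \ XbarV G FAv FGv a b i (j - 1)

/-- Environment moves permitted during the inductive construction of `R_{f¹}`
in the vectorized setting. -/
def envStepV {Q : Type*} {n m : ℕ} (G : GameGraph Q) (FAv : Fin m → Set Q)
    (FGv : Fin n → Set Q) (q' q'' : Q) : Prop :=
  q'' ∈ G.delta q' ∧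
    ∃ (a : Fin n) (b : Fin m) (i j : ℕ), nrankV G FAv FGv a b q' i j ∧
      ((q'' ∈ (phi4vSem G FAv FGv)ᶜ ∧
          ∃ b' i' j', nrankV G FAv FGv (modeSucc a) b' q'' i' j' ∧ i' ≤ i - 1) ∨
       (q' ∈ FAv b \ FGv a ∧ q'' ∈ (phi4vSem G FAv FGv)ᶜ ∧
          ∃ b' i' j', nrankV G FAv FGv a b' q'' i' j' ∧ i' ≤ i) ∨
       (q'' ∈ (phi4vSem G FAv FGv)ᶜ ∧
          ∃ i' j', nrankV G FAv FGv a b q'' i' j' ∧ rankLe (i', j') (i, j - 1)) ∨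
       (q'' ∈ (phi4vSem G FAv FGv)ᶜ ∧ q'' ∈ FAv b ∧
          ∃ i' j', nrankV G FAv FGv a b q'' i' j' ∧ rankLe (i', j') (i, j)) ∨
       (∀ p ∈ G.delta q', p ∈ (phi4vSem G FAv FGv)ᶜ ∧
          ∃ i' j', nrankV G FAv FGv a b p i' j' ∧ rankLe (i', j') (i, j)))

/-- `L_q(H,f¹,R_{f¹})` in the vectorized setting. -/
def LrestrV {Q : Type*} {n m : ℕ} (G : GameGraph Q) (FAv : Fin m → Set Q)
    (FGv : Fin n → Set Q) (q : Q) (f : List Q → Q) : Set (ℕ → Q) :=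
  {π | π ∈ Lstrat G q f ∧ ∀ k, π k ∈ G.env → envStepV G FAv FGv (π k) (π (k + 1))}
/-! ### Auxiliary development for the proof of Statement 19 -/

section KnasterTarski

variable {Q : Type*}

lemma lfpSet_le {F : Set Q → Set Q} {S : Set Q} (h : F S ⊆ S) : lfpSet F ⊆ S :=
  Set.sInter_subset_of_mem h

lemma prefixed_lfpSet {F : Set Q → Set Q} (hF : Monotone F) : F (lfpSet F) ⊆ lfpSet F := by
  intro x hx
  refine Set.mem_sInter.2 fun T hT => ?_
  exact hT (hF (lfpSet_le hT) hx)

lemma lfpSet_fixed {F : Set Q → Set Q} (hF : Monotone F) : F (lfpSet F) = lfpSet F :=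
  (prefixed_lfpSet hF).antisymm (lfpSet_le (hF (prefixed_lfpSet hF)))

lemma le_gfpSet {F : Set Q → Set Q} {S : Set Q} (h : S ⊆ F S) : S ⊆ gfpSet F :=
  fun x hx => Set.mem_sUnion.2 ⟨S, h, hx⟩

lemma gfpSet_postfixed {F : Set Q → Set Q} (hF : Monotone F) : gfpSet F ⊆ F (gfpSet F) := by
  intro x hx
  obtain ⟨T, hT, hxT⟩ := Set.mem_sUnion.1 hx
  exact hF (le_gfpSet hT) (hT hxT)

lemma gfpSet_fixed {F : Set Q → Set Q} (hF : Monotone F) : F (gfpSet F) = gfpSet F :=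
  (le_gfpSet (hF (gfpSet_postfixed hF))).antisymm (gfpSet_postfixed hF)

lemma lfpSet_mono {F F' : Set Q → Set Q} (h : ∀ S, F S ⊆ F' S) : lfpSet F ⊆ lfpSet F' := by
  apply Set.sInter_subset_sInter
  intro S hS
  exact (h S).trans hS

lemma gfpSet_mono {F F' : Set Q → Set Q} (h : ∀ S, F S ⊆ F' S) : gfpSet F ⊆ gfpSet F' := by
  apply Set.sUnion_subset_sUnion
  intro S hS
  exact hS.trans (h S)

end KnasterTarski

section GameBasics

variable {Q : Type*} (G : GameGraph Q)

lemma GameGraph.env_or_sys (p : Q) : p ∈ G.env ∨ p ∈ G.sys := by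
  have h : p ∈ G.env ∪ G.sys := by rw [G.union_env_sys]; trivial
  exact h

lemma GameGraph.not_sys_of_env {p : Q} (hp : p ∈ G.env) : p ∉ G.sys :=
  fun hs => Set.disjoint_left.1 G.disjoint_env_sys hp hs

lemma GameGraph.mem_Pre1_of_env {p : Q} {P : Set Q} (hp : p ∈ G.env)
    (h : G.delta p ⊆ P) : p ∈ G.Pre1 P := Or.inl ⟨hp, h⟩

lemma GameGraph.mem_Pre1_of_sys {p : Q} {P : Set Q} (hp : p ∈ G.sys)
    {z : Q} (hz : z ∈ G.delta p) (hzP : z ∈ P) : p ∈ G.Pre1 P := Or.inr ⟨hp, z, hz, hzP⟩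

lemma GameGraph.exists_not_of_not_Pre1_env {p : Q} {P : Set Q} (hp : p ∈ G.env)
    (h : p ∉ G.Pre1 P) : ∃ z ∈ G.delta p, z ∉ P := by
  by_contra hc
  push_neg at hc
  exact h (G.mem_Pre1_of_env hp hc)

lemma GameGraph.forall_not_of_not_Pre1_sys {p : Q} {P : Set Q} (hp : p ∈ G.sys)
    (h : p ∉ G.Pre1 P) : ∀ z ∈ G.delta p, z ∉ P := by
  intro z hz hzP
  exact h (G.mem_Pre1_of_sys hp hz hzP)

lemma GameGraph.Pre1_mono : Monotone G.Pre1 := by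
  intro P P' hPP' x hx
  rcases hx with ⟨he, hsub⟩ | ⟨hs, z, hz, hzP⟩
  · exact Or.inl ⟨he, hsub.trans hPP'⟩
  · exact Or.inr ⟨hs, z, hz, hPP' hzP⟩

lemma bodyV_mono_W {n m : ℕ} (FAv : Fin m → Set Q) (FGv : Fin n → Set Q)
    (Zv : Fin n → Set Q) (a : Fin n) (b : Fin m) (Y X : Set Q) :
    Monotone (fun W => bodyV G FAv FGv Zv a b Y X W) := by
  intro W W' hWW' x hx
  rcases hx with hx | ⟨hc, hE, h1⟩
  · exact Or.inl hx
  · refine Or.inr ⟨hc, ?_, G.Pre1_mono (Set.union_subset_union_left _ hWW') h1⟩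
    obtain ⟨z, hz, hzW⟩ := hE
    exact ⟨z, hz, hWW' hzW⟩

lemma bodyV_mono_XY {n m : ℕ} (FAv : Fin m → Set Q) (FGv : Fin n → Set Q)
    (Zv : Fin n → Set Q) (a : Fin n) (b : Fin m) {Y Y' X X' : Set Q}
    (hY : Y ⊆ Y') (hX : X ⊆ X') (W : Set Q) :
    bodyV G FAv FGv Zv a b Y X W ⊆ bodyV G FAv FGv Zv a b Y' X' W := by
  intro x hx
  rcases hx with (hx | hx) | ⟨hc, hE, h1⟩
  · exact Or.inl (Or.inl hx)
  · exact Or.inl (Or.inr (G.Pre1_mono hY hx))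
  · refine Or.inr ⟨hc, hE, G.Pre1_mono ?_ h1⟩
    exact Set.union_subset_union_right _ (Set.diff_subset_diff_left hX)

lemma innerWV_mono_XY {n m : ℕ} (FAv : Fin m → Set Q) (FGv : Fin n → Set Q)
    (Zv : Fin n → Set Q) (a : Fin n) (b : Fin m) {Y Y' X X' : Set Q}
    (hY : Y ⊆ Y') (hX : X ⊆ X') :
    innerWV G FAv FGv Zv a b Y X ⊆ innerWV G FAv FGv Zv a b Y' X' :=
  lfpSet_mono fun W => bodyV_mono_XY G FAv FGv Zv a b hY hX W

lemma innerWV_fixed {n m : ℕ} (FAv : Fin m → Set Q) (FGv : Fin n → Set Q)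
    (Zv : Fin n → Set Q) (a : Fin n) (b : Fin m) (Y X : Set Q) :
    bodyV G FAv FGv Zv a b Y X (innerWV G FAv FGv Zv a b Y X) =
      innerWV G FAv FGv Zv a b Y X :=
  lfpSet_fixed (bodyV_mono_W G FAv FGv Zv a b Y X)

lemma innerXV_mono_Y {n m : ℕ} (FAv : Fin m → Set Q) (FGv : Fin n → Set Q)
    (Zv : Fin n → Set Q) (a : Fin n) (b : Fin m) {Y Y' : Set Q} (hY : Y ⊆ Y') :
    innerXV G FAv FGv Zv a b Y ⊆ innerXV G FAv FGv Zv a b Y' :=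
  gfpSet_mono fun X => innerWV_mono_XY G FAv FGv Zv a b hY subset_rfl

lemma innerXV_fixed {n m : ℕ} (FAv : Fin m → Set Q) (FGv : Fin n → Set Q)
    (Zv : Fin n → Set Q) (a : Fin n) (b : Fin m) (Y : Set Q) :
    innerWV G FAv FGv Zv a b Y (innerXV G FAv FGv Zv a b Y) =
      innerXV G FAv FGv Zv a b Y :=
  gfpSet_fixed fun X X' hX => innerWV_mono_XY G FAv FGv Zv a b subset_rfl hX

end GameBasics
section Plays

open scoped Classical

variable {Q : Type*} (G : GameGraph Q) (q : Q) (f : List Q → Q)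

lemma histUpTo_snoc (π : ℕ → Q) (k : ℕ) :
    histUpTo π k = ((List.range k).map π) ++ [π k] := by
  unfold histUpTo
  rw [List.range_succ, List.map_append, List.map_singleton]

lemma histUpTo_congr {π ρ : ℕ → Q} {k : ℕ} (h : ∀ j ≤ k, ρ j = π j) :
    histUpTo ρ k = histUpTo π k := by
  unfold histUpTo
  apply List.map_congr_left
  intro j hj
  exact h j (Nat.lt_succ_iff.1 (List.mem_range.1 hj))

lemma range_map_eq_iff {π ρ : ℕ → Q} {k : ℕ}
    (h : (List.range k).map π = (List.range k).map ρ) : ∀ j < k, π j = ρ j := by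
  intro j hj
  have h2 := congrArg (fun l => l[j]?) h
  simpa [List.getElem?_map, List.getElem?_range, hj] using h2

/-- Default successor choice. -/
noncomputable def dflt (p : Q) : Q := (G.delta_nonempty p).some

lemma dflt_mem (p : Q) : dflt G p ∈ G.delta p := (G.delta_nonempty p).some_mem

/-- Default next state after a history. -/
noncomputable def nxt (v : List Q) : Q :=
  if (v.getLastD q) ∈ G.sys then f v else dflt G (v.getLastD q)

/-- Completion of a finite history into a full compliant play: list of positions. -/
noncomputable def compList (h : ℕ → Q) (k : ℕ) : ℕ → List Q
  | 0 => [h 0]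
  | j + 1 => compList h k j ++
      [if j + 1 ≤ k then h (j + 1) else nxt G q f (compList h k j)]

/-- Completion of a finite history into a full compliant play. -/
noncomputable def compPlay (h : ℕ → Q) (k : ℕ) : ℕ → Q :=
  fun j => (compList G q f h k j).getLastD q

lemma compPlay_zero (h : ℕ → Q) (k : ℕ) : compPlay G q f h k 0 = h 0 := rfl

lemma compList_succ (h : ℕ → Q) (k j : ℕ) :
    compList G q f h k (j + 1) = compList G q f h k j ++
      [if j + 1 ≤ k then h (j + 1) else nxt G q f (compList G q f h k j)] := rfl

lemma compPlay_succ (h : ℕ → Q) (k j : ℕ) :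
    compPlay G q f h k (j + 1) =
      if j + 1 ≤ k then h (j + 1) else nxt G q f (compList G q f h k j) := by
  unfold compPlay
  rw [compList_succ, List.getLastD_concat]

lemma compList_eq_histUpTo (h : ℕ → Q) (k j : ℕ) :
    compList G q f h k j = histUpTo (compPlay G q f h k) j := by
  induction j with
  | zero =>
      unfold histUpTo
      simp [compList, compPlay_zero, List.range_succ]
  | succ j ih =>
      rw [histUpTo_snoc]
      have hr : (List.range (j + 1)).map (compPlay G q f h k) =
          histUpTo (compPlay G q f h k) j := rfl
      rw [hr, ← ih]
      rw [compList_succ, compPlay_succ]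

lemma compPlay_le (h : ℕ → Q) (k : ℕ) : ∀ j ≤ k, compPlay G q f h k j = h j := by
  intro j hj
  cases j with
  | zero => exact compPlay_zero G q f h k
  | succ j => rw [compPlay_succ, if_pos hj]

lemma compPlay_mem (hf : IsSysStrategy G f) (h : ℕ → Q) (k : ℕ)
    (h0 : h 0 = q)
    (htrans : ∀ j < k, h (j + 1) ∈ G.delta (h j))
    (hcomp : ∀ j < k, h j ∈ G.sys → h (j + 1) = f (histUpTo h j)) :
    compPlay G q f h k ∈ Lstrat G q f := by
  set π := compPlay G q f h k with hπ
  have hhist : ∀ j, histUpTo π j = (List.range j).map π ++ [π j] := fun j => histUpTo_snoc π j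
  have hfmem : ∀ j, π j ∈ G.sys → f (histUpTo π j) ∈ G.delta (π j) := by
    intro j hs
    rw [hhist j]
    exact hf _ _ hs
  have hnxt : ∀ j, ¬(j + 1 ≤ k) → π (j + 1) = nxt G q f (histUpTo π j) := by
    intro j hj
    rw [hπ, compPlay_succ, if_neg hj, compList_eq_histUpTo]
  have hlast : ∀ j, (histUpTo π j).getLastD q = π j := by
    intro j
    rw [hhist j, List.getLastD_concat]
  refine ⟨⟨by rw [hπ, compPlay_zero, h0], ?_⟩, ?_⟩
  · intro j
    by_cases hj : j + 1 ≤ k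
    · have h1 : π (j + 1) = h (j + 1) := compPlay_le G q f h k _ hj
      have h2 : π j = h j := compPlay_le G q f h k _ (Nat.le_of_succ_le hj)
      rw [h1, h2]
      exact htrans j (Nat.lt_of_succ_le hj)
    · rw [hnxt j hj]
      unfold nxt
      rw [hlast j]
      by_cases hs : π j ∈ G.sys
      · rw [if_pos hs]; exact hfmem j hs
      · rw [if_neg hs]; exact dflt_mem G (π j)
  · intro j hs
    by_cases hj : j + 1 ≤ k
    · have h1 : π (j + 1) = h (j + 1) := compPlay_le G q f h k _ hj
      have h2 : histUpTo π j = histUpTo h j :=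
        histUpTo_congr (fun i hi => compPlay_le G q f h k _ (hi.trans (Nat.le_of_succ_le hj)))
      rw [h1, h2]
      exact hcomp j (Nat.lt_of_succ_le hj) (by rw [← compPlay_le G q f h k j (Nat.le_of_succ_le hj)]; exact hs)
    · rw [hnxt j hj]
      unfold nxt
      rw [hlast j, if_pos hs]

/-- Deviation lemma: from a play one can branch at position `k + 1` to any
admissible successor and remain compliant. -/
lemma deviate (hf : IsSysStrategy G f) {π : ℕ → Q} (hπ : π ∈ Lstrat G q f)
    (k : ℕ) {z : Q} (hz : z ∈ G.delta (π k))
    (hzs : π k ∈ G.sys → z = f (histUpTo π k)) :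
    ∃ σ ∈ Lstrat G q f, (∀ j ≤ k, σ j = π j) ∧ σ (k + 1) = z := by
  set h : ℕ → Q := fun j => if j ≤ k then π j else z with hh
  have hle : ∀ j ≤ k, h j = π j := fun j hj => if_pos hj
  have hk1 : h (k + 1) = z := if_neg (Nat.not_succ_le_self k)
  have hmem : compPlay G q f h (k + 1) ∈ Lstrat G q f := by
    apply compPlay_mem G q f hf h (k + 1)
    · rw [hle 0 (Nat.zero_le k)]; exact hπ.1.1
    · intro j hj
      rcases Nat.lt_succ_iff_lt_or_eq.1 hj with hj' | hj'
      · rw [hle (j + 1) hj', hle j (Nat.le_of_succ_le hj')]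
        exact hπ.1.2 j
      · subst hj'
        rw [hk1, hle j le_rfl]
        exact hz
    · intro j hj hsys
      rcases Nat.lt_succ_iff_lt_or_eq.1 hj with hj' | hj'
      · rw [hle (j + 1) hj',
          histUpTo_congr (fun i hi => hle i (hi.trans (Nat.le_of_succ_le hj')))]
        exact hπ.2 j (by rw [← hle j (Nat.le_of_succ_le hj')]; exact hsys)
      · subst hj'
        rw [hk1, histUpTo_congr (fun i hi => hle i hi)]
        exact hzs (by rw [← hle j le_rfl]; exact hsys)
  refine ⟨compPlay G q f h (k + 1), hmem, ?_, ?_⟩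
  · intro j hj
    rw [compPlay_le G q f h (k + 1) j (hj.trans (Nat.le_succ k)), hle j hj]
  · rw [compPlay_le G q f h (k + 1) (k + 1) le_rfl, hk1]

/-- The set of states reachable under the strategy `f`. -/
def SR : Set Q := {p | ∃ π ∈ Lstrat G q f, ∃ k, π k = p}

lemma mem_SR {π : ℕ → Q} (hπ : π ∈ Lstrat G q f) (k : ℕ) : π k ∈ SR G q f :=
  ⟨π, hπ, k, rfl⟩

lemma SR_subset_Pre1 (hf : IsSysStrategy G f) : SR G q f ⊆ G.Pre1 (SR G q f) := by
  rintro p ⟨π, hπ, k, rfl⟩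
  rcases G.env_or_sys (π k) with he | hs
  · refine G.mem_Pre1_of_env he ?_
    intro z hz
    obtain ⟨σ, hσ, -, hσk⟩ := deviate G q f hf hπ k hz
      (fun hs => absurd hs (G.not_sys_of_env he))
    exact hσk ▸ mem_SR G q f hσ (k + 1)
  · have hz : f (histUpTo π k) ∈ G.delta (π k) := by
      rw [histUpTo_snoc]; exact hf _ _ hs
    obtain ⟨σ, hσ, -, hσk⟩ := deviate G q f hf hπ k hz (fun _ => rfl)
    exact G.mem_Pre1_of_sys hs hz (hσk ▸ mem_SR G q f hσ (k + 1))

end Plays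
section FixedPointLayer

variable {Q : Type*} {n m : ℕ} [NeZero n] [NeZero m]
variable (G : GameGraph Q) (q : Q) (f : List Q → Q)
variable (FAv : Fin m → Set Q) (FGv : Fin n → Set Q) (a : Fin n) (b : Fin m)

/-- The value of `μY` at the candidate vector `const S`. -/
def Yinf : Set Q :=
  lfpSet (fun Y => ⋃ b, innerXV G FAv FGv (fun _ => SR G q f) a b Y)

/-- `Bad = (F_G^a ∩ Pre¹(S)) ∪ Pre¹(Y∞)`. -/
def BadS : Set Q :=
  (FGv a ∩ G.Pre1 (SR G q f)) ∪ G.Pre1 (Yinf G q f FAv FGv a)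

lemma Yinf_fixed :
    (⋃ b, innerXV G FAv FGv (fun _ => SR G q f) a b (Yinf G q f FAv FGv a)) =
      Yinf G q f FAv FGv a :=
  lfpSet_fixed (fun Y Y' hY => Set.iUnion_mono fun b =>
    innerXV_mono_Y G FAv FGv _ a b hY)

lemma Bad_subset_Yinf : BadS G q f FAv FGv a ⊆ Yinf G q f FAv FGv a := by
  intro x hx
  set b₀ : Fin m := ⟨0, Nat.pos_of_ne_zero (NeZero.ne m)⟩
  set Y := Yinf G q f FAv FGv a
  have hmem : x ∈ bodyV G FAv FGv (fun _ => SR G q f) a b₀ Y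
      (innerXV G FAv FGv (fun _ => SR G q f) a b₀ Y)
      (innerWV G FAv FGv (fun _ => SR G q f) a b₀ Y
        (innerXV G FAv FGv (fun _ => SR G q f) a b₀ Y)) := by
    rcases hx with hx | hx
    · exact Or.inl (Or.inl hx)
    · exact Or.inl (Or.inr hx)
  rw [innerWV_fixed, innerXV_fixed] at hmem
  have h2 : x ∈ ⋃ b, innerXV G FAv FGv (fun _ => SR G q f) a b Y :=
    Set.mem_iUnion.2 ⟨b₀, hmem⟩
  rw [Yinf_fixed] at h2
  exact h2

lemma not_FG_of_not_Bad (hf : IsSysStrategy G f) {p : Q} (hp : p ∈ SR G q f)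
    (h : p ∉ BadS G q f FAv FGv a) : p ∉ FGv a :=
  fun hFG => h (Or.inl ⟨hFG, SR_subset_Pre1 G q f hf hp⟩)

lemma not_Bad_of_not_Yinf {p : Q} (h : p ∉ Yinf G q f FAv FGv a) :
    p ∉ BadS G q f FAv FGv a :=
  fun hB => h (Bad_subset_Yinf G q f FAv FGv a hB)

/-- A position of a play is `b`-stuck if no compliant continuation avoiding `Bad`
can reach `F_A^b`. -/
def Stuck (π : ℕ → Q) (k : ℕ) : Prop :=
  π k ∉ FAv b ∧ π k ∉ BadS G q f FAv FGv a ∧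
    ∀ ρ ∈ Lstrat G q f, (∀ j ≤ k, ρ j = π j) → ∀ t, k < t →
      (∀ s, k < s → s ≤ t → ρ s ∉ BadS G q f FAv FGv a) → ρ t ∉ FAv b

/-- The set of states at which some reachable history is `b`-stuck. -/
def XdagS : Set Q :=
  {p | ∃ π ∈ Lstrat G q f, ∃ k, π k = p ∧ Stuck G q f FAv FGv a b π k}

/-- The `W`-fixed point associated with the stuck set. -/
def WstarS : Set Q :=
  innerWV G FAv FGv (fun _ => SR G q f) a b (Yinf G q f FAv FGv a)
    (XdagS G q f FAv FGv a b)

lemma Wstar_fixed :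
    bodyV G FAv FGv (fun _ => SR G q f) a b (Yinf G q f FAv FGv a)
      (XdagS G q f FAv FGv a b) (WstarS G q f FAv FGv a b) =
        WstarS G q f FAv FGv a b :=
  innerWV_fixed G FAv FGv _ a b _ _

lemma Bad_subset_Wstar : BadS G q f FAv FGv a ⊆ WstarS G q f FAv FGv a b := by
  intro x hx
  rw [← Wstar_fixed]
  rcases hx with hx | hx
  · exact Or.inl (Or.inl hx)
  · exact Or.inl (Or.inr hx)

lemma stuck_congr {π ρ : ℕ → Q} {k : ℕ} (hag : ∀ j ≤ k, ρ j = π j)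
    (hst : Stuck G q f FAv FGv a b π k) : Stuck G q f FAv FGv a b ρ k := by
  refine ⟨by rw [hag k le_rfl]; exact hst.1, by rw [hag k le_rfl]; exact hst.2.1, ?_⟩
  intro ρ' hρ' hag' t ht havoid
  exact hst.2.2 ρ' hρ' (fun j hj => (hag' j hj).trans (hag j hj)) t ht havoid

lemma stuck_one {π : ℕ → Q} {k : ℕ} (hst : Stuck G q f FAv FGv a b π k)
    {σ : ℕ → Q} (hσ : σ ∈ Lstrat G q f) (hag : ∀ j ≤ k, σ j = π j)
    (hB : σ (k + 1) ∉ BadS G q f FAv FGv a) : σ (k + 1) ∉ FAv b := by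
  refine hst.2.2 σ hσ hag (k + 1) (Nat.lt_succ_self k) ?_
  intro s hs hs'
  have : s = k + 1 := by omega
  rw [this]
  exact hB

lemma stuck_step {π : ℕ → Q} {k : ℕ} (hst : Stuck G q f FAv FGv a b π k)
    {σ : ℕ → Q} (hσ : σ ∈ Lstrat G q f) (hag : ∀ j ≤ k, σ j = π j)
    (hB : σ (k + 1) ∉ BadS G q f FAv FGv a) : Stuck G q f FAv FGv a b σ (k + 1) := by
  refine ⟨stuck_one G q f FAv FGv a b hst hσ hag hB, hB, ?_⟩
  intro ρ hρ hag' t ht havoid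
  refine hst.2.2 ρ hρ (fun j hj => (hag' j (by omega)).trans (hag j hj)) t (by omega) ?_
  intro s hs hs'
  rcases Nat.lt_or_ge k s with h | h
  · rcases Nat.eq_or_lt_of_le (Nat.succ_le_of_lt hs) with h' | h'
    · rw [← h']
      rw [hag' (k+1) le_rfl]
      exact hB
    · exact havoid s h' hs'
  · omega

/-- Key ranked induction: a stuck position whose `A`-continuation first meets `Bad`
after `d + 1` steps lies in `W*`. -/
lemma stuck_rec (hf : IsSysStrategy G f) :
    ∀ d k t₁ (ρ : ℕ → Q), ρ ∈ Lstrat G q f → Stuck G q f FAv FGv a b ρ k →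
      k < t₁ → ρ t₁ ∈ BadS G q f FAv FGv a →
      (∀ s, k < s → s < t₁ → ρ s ∉ BadS G q f FAv FGv a) →
      t₁ - (k + 1) = d → ρ k ∈ WstarS G q f FAv FGv a b := by
  have close : ∀ (ρ : ℕ → Q), ρ ∈ Lstrat G q f → ∀ k, Stuck G q f FAv FGv a b ρ k →
      ρ (k + 1) ∈ WstarS G q f FAv FGv a b → ρ k ∈ WstarS G q f FAv FGv a b := by
    intro ρ hρ k hst hnext
    have hdel : ρ (k + 1) ∈ G.delta (ρ k) := hρ.1.2 k
    rw [← Wstar_fixed]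
    refine Or.inr ⟨hst.1, ⟨ρ (k + 1), hdel, hnext⟩, ?_⟩
    rcases G.env_or_sys (ρ k) with he | hs
    · refine G.mem_Pre1_of_env he ?_
      intro z hz
      obtain ⟨σ, hσ, hag, hσk⟩ := deviate G q f hf hρ k hz
        (fun hs' => absurd hs' (G.not_sys_of_env he))
      by_cases hzB : z ∈ BadS G q f FAv FGv a
      · exact Or.inl (Bad_subset_Wstar G q f FAv FGv a b hzB)
      · have hσB : σ (k + 1) ∉ BadS G q f FAv FGv a := by rw [hσk]; exact hzB
        have hst' := stuck_step G q f FAv FGv a b hst hσ hag hσB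
        refine Or.inr ⟨⟨σ, hσ, k + 1, hσk, hst'⟩, ?_⟩
        rw [← hσk]
        exact hst'.1
    · exact G.mem_Pre1_of_sys hs hdel (Or.inl hnext)
  intro d
  induction d with
  | zero =>
      intro k t₁ ρ hρ hst hkt hbad _ hd
      have ht1 : t₁ = k + 1 := by omega
      subst ht1
      exact close ρ hρ k hst (Bad_subset_Wstar G q f FAv FGv a b hbad)
  | succ d ih =>
      intro k t₁ ρ hρ hst hkt hbad havoid hd
      have h1 : ρ (k + 1) ∉ BadS G q f FAv FGv a := havoid (k + 1) (Nat.lt_succ_self k) (by omega)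
      have hst' := stuck_step G q f FAv FGv a b hst hρ (fun _ _ => rfl) h1
      have hnext : ρ (k + 1) ∈ WstarS G q f FAv FGv a b :=
        ih (k + 1) t₁ ρ hρ hst' (by omega) hbad (fun s hs hs' => havoid s (by omega) hs')
          (by omega)
      exact close ρ hρ k hst hnext

/-- Prefix extension: under prefix equality every position extends to a compliant
play satisfying the assumptions. -/
lemma prefix_ext
    (hPE : prefixes (Lstrat G q f) = prefixes (Lstrat G q f ∩ LGenBuchi G q FAv))
    {π : ℕ → Q} (hπ : π ∈ Lstrat G q f) (k : ℕ) :
    ∃ ρ, ρ ∈ Lstrat G q f ∧ (∀ i, InfOft ρ (FAv i)) ∧ ∀ j ≤ k, ρ j = π j := by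
  have hw : (List.range (k + 1)).map π ∈ prefixes (Lstrat G q f) := ⟨π, hπ, k + 1, rfl⟩
  rw [hPE] at hw
  obtain ⟨ρ, ⟨hρL, hρA⟩, k', hk'⟩ := hw
  have hlen : k + 1 = k' := by
    have h := congrArg List.length hk'
    simpa using h
  subst hlen
  have h2 := range_map_eq_iff hk'
  exact ⟨ρ, hρL, hρA.2, fun j hj => (h2 j (by omega)).symm⟩

/-- **Theorem A**: a stuck position lies in `Y∞`. -/
lemma stuck_mem_Yinf (hf : IsSysStrategy G f)
    (hPE : prefixes (Lstrat G q f) = prefixes (Lstrat G q f ∩ LGenBuchi G q FAv)) :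
    ∀ π ∈ Lstrat G q f, ∀ k, Stuck G q f FAv FGv a b π k →
      π k ∈ Yinf G q f FAv FGv a := by
  have hXW : XdagS G q f FAv FGv a b ⊆ WstarS G q f FAv FGv a b := by
    rintro p ⟨π, hπ, k, rfl, hst⟩
    obtain ⟨ρ, hρL, hρA, hagree⟩ := prefix_ext G q f FAv hPE hπ k
    have hstρ : Stuck G q f FAv FGv a b ρ k := stuck_congr G q f FAv FGv a b hagree hst
    obtain ⟨t₀, ht₀, ht₀mem⟩ := hρA b (k + 1)
    have hex : ∃ s, k < s ∧ s ≤ t₀ ∧ ρ s ∈ BadS G q f FAv FGv a := by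
      by_contra hc
      push_neg at hc
      exact hstρ.2.2 ρ hρL (fun _ _ => rfl) t₀ (by omega)
        (fun s hs hs' => hc s hs hs') ht₀mem
    classical
    obtain ⟨h1, _, h3⟩ := Nat.find_spec hex
    have hmin : ∀ s, k < s → s < Nat.find hex → ρ s ∉ BadS G q f FAv FGv a := by
      intro s hs hst1 hmem
      exact Nat.find_min hex hst1 ⟨hs, by omega, hmem⟩
    have hρk : ρ k ∈ WstarS G q f FAv FGv a b :=
      stuck_rec G q f FAv FGv a b hf (Nat.find hex - (k + 1)) k (Nat.find hex) ρ hρL hstρ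
        h1 h3 hmin rfl
    rw [← hagree k le_rfl]
    exact hρk
  have hXY : XdagS G q f FAv FGv a b ⊆ Yinf G q f FAv FGv a := by
    have h1 : XdagS G q f FAv FGv a b ⊆
        innerXV G FAv FGv (fun _ => SR G q f) a b (Yinf G q f FAv FGv a) :=
      le_gfpSet hXW
    have h2 := h1.trans (Set.subset_iUnion
      (fun b => innerXV G FAv FGv (fun _ => SR G q f) a b (Yinf G q f FAv FGv a)) b)
    rw [Yinf_fixed] at h2
    exact h2
  intro π hπ k hst
  exact hXY ⟨π, hπ, k, rfl, hst⟩

lemma onestep (hf : IsSysStrategy G f) {π : ℕ → Q} (hπ : π ∈ Lstrat G q f) (k : ℕ)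
    (h : π k ∉ G.Pre1 (Yinf G q f FAv FGv a)) :
    ∃ σ ∈ Lstrat G q f, (∀ j ≤ k, σ j = π j) ∧ σ (k + 1) ∉ Yinf G q f FAv FGv a := by
  rcases G.env_or_sys (π k) with he | hs
  · obtain ⟨z, hz, hzY⟩ := G.exists_not_of_not_Pre1_env he h
    obtain ⟨σ, hσ, hag, hσk⟩ := deviate G q f hf hπ k hz
      (fun hs' => absurd hs' (G.not_sys_of_env he))
    exact ⟨σ, hσ, hag, hσk ▸ hzY⟩
  · have hz : f (histUpTo π k) ∈ G.delta (π k) := by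
      rw [histUpTo_snoc]
      exact hf _ _ hs
    have hzY := G.forall_not_of_not_Pre1_sys hs h _ hz
    obtain ⟨σ, hσ, hag, hσk⟩ := deviate G q f hf hπ k hz (fun _ => rfl)
    exact ⟨σ, hσ, hag, hσk ▸ hzY⟩

/-- **Phase lemma**: from outside `Y∞` the environment can reach `F_A^b` avoiding
`F_G^a` and return outside `Y∞`. -/
lemma phase (hf : IsSysStrategy G f)
    (hPE : prefixes (Lstrat G q f) = prefixes (Lstrat G q f ∩ LGenBuchi G q FAv))
    {π : ℕ → Q} (hπ : π ∈ Lstrat G q f) (k : ℕ) (hk : π k ∉ Yinf G q f FAv FGv a) :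
    ∃ σ ∈ Lstrat G q f, ∃ k', k < k' ∧ (∀ j ≤ k, σ j = π j) ∧
      σ k' ∉ Yinf G q f FAv FGv a ∧ (∃ t, k ≤ t ∧ t ≤ k' ∧ σ t ∈ FAv b) ∧
      (∀ t, k < t → t ≤ k' → σ t ∉ FGv a) := by
  have hkB : π k ∉ BadS G q f FAv FGv a := not_Bad_of_not_Yinf G q f FAv FGv a hk
  have hkP : π k ∉ G.Pre1 (Yinf G q f FAv FGv a) := fun h => hkB (Or.inr h)
  by_cases hpb : π k ∈ FAv b
  · obtain ⟨σ, hσ, hag, hσY⟩ := onestep G q f FAv FGv a hf hπ k hkP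
    refine ⟨σ, hσ, k + 1, Nat.lt_succ_self k, hag, hσY,
      ⟨k, le_rfl, Nat.le_succ k, by rw [hag k le_rfl]; exact hpb⟩, ?_⟩
    intro t ht ht'
    have : t = k + 1 := by omega
    subst this
    exact not_FG_of_not_Bad G q f FAv FGv a hf (mem_SR G q f hσ (k + 1))
      (not_Bad_of_not_Yinf G q f FAv FGv a hσY)
  · have hnst : ¬ Stuck G q f FAv FGv a b π k :=
      fun hst => hk (stuck_mem_Yinf G q f FAv FGv a b hf hPE π hπ k hst)
    unfold Stuck at hnst
    push_neg at hnst
    obtain ⟨ρ, hρ, hag, t, hkt, havoid, hFA⟩ := hnst hpb hkB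
    have hρtB : ρ t ∉ BadS G q f FAv FGv a := havoid t hkt le_rfl
    obtain ⟨σ, hσ, hagt, hσY⟩ := onestep G q f FAv FGv a hf hρ t (fun h => hρtB (Or.inr h))
    refine ⟨σ, hσ, t + 1, by omega, ?_, hσY,
      ⟨t, by omega, Nat.le_succ t, by rw [hagt t le_rfl]; exact hFA⟩, ?_⟩
    · intro j hj
      rw [hagt j (by omega), hag j hj]
    · intro t' ht' ht''
      by_cases hc : t' = t + 1
      · subst hc
        exact not_FG_of_not_Bad G q f FAv FGv a hf (mem_SR G q f hσ (t + 1))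
          (not_Bad_of_not_Yinf G q f FAv FGv a hσY)
      · have ht3 : t' ≤ t := by omega
        rw [hagt t' ht3]
        exact not_FG_of_not_Bad G q f FAv FGv a hf (mem_SR G q f hρ t')
          (havoid t' ht' ht3)

end FixedPointLayer
section Assembly

variable {Q : Type*} {n m : ℕ} [NeZero n] [NeZero m]
variable (G : GameGraph Q) (q : Q) (f : List Q → Q)
variable (FAv : Fin m → Set Q) (FGv : Fin n → Set Q) (a : Fin n)

/-- Main lemma: under prefix equality and the winning hypothesis, every reachable
state lies in `Y∞(a)`. -/
lemma SR_subset_Yinf (hf : IsSysStrategy G f)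
    (hPE : prefixes (Lstrat G q f) = prefixes (Lstrat G q f ∩ LGenBuchi G q FAv))
    (hwin2 : Lstrat G q f ⊆ (LGenBuchi G q FAv)ᶜ ∪ LGenBuchi G q FGv) :
    SR G q f ⊆ Yinf G q f FAv FGv a := by
  classical
  by_contra hc
  rw [Set.not_subset] at hc
  obtain ⟨p, hpS, hpY⟩ := hc
  obtain ⟨π₀, hπ₀, k₀, hk₀⟩ := hpS
  -- the type of positions outside `Y∞`
  let St := {x : (ℕ → Q) × ℕ // x.1 ∈ Lstrat G q f ∧ x.1 x.2 ∉ Yinf G q f FAv FGv a}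
  have hstep : ∀ (b : Fin m) (s : St), ∃ s' : St, s.1.2 < s'.1.2 ∧
      (∀ j ≤ s.1.2, s'.1.1 j = s.1.1 j) ∧
      (∃ t, s.1.2 ≤ t ∧ t ≤ s'.1.2 ∧ s'.1.1 t ∈ FAv b) ∧
      (∀ t, s.1.2 < t → t ≤ s'.1.2 → s'.1.1 t ∉ FGv a) := by
    rintro b ⟨⟨π, k⟩, hπ, hk⟩
    obtain ⟨σ, hσ, k', hkk', hag, hσY, hvisit, hFG⟩ :=
      phase G q f FAv FGv a b hf hPE hπ k hk
    exact ⟨⟨(σ, k'), hσ, hσY⟩, hkk', hag, hvisit, hFG⟩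
  have hm : 0 < m := Nat.pos_of_ne_zero (NeZero.ne m)
  let bOf : ℕ → Fin m := fun n' => ⟨n' % m, Nat.mod_lt _ hm⟩
  let s₀ : St := ⟨(π₀, k₀), hπ₀, by show π₀ k₀ ∉ _; rw [hk₀]; exact hpY⟩
  let Ψ : ℕ → St := fun n' => Nat.rec s₀ (fun n' ih => (hstep (bOf n') ih).choose) n'
  have hΨ0 : Ψ 0 = s₀ := rfl
  have hΨs : ∀ n', (Ψ n').1.2 < (Ψ (n' + 1)).1.2 ∧
      (∀ j ≤ (Ψ n').1.2, (Ψ (n' + 1)).1.1 j = (Ψ n').1.1 j) ∧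
      (∃ t, (Ψ n').1.2 ≤ t ∧ t ≤ (Ψ (n' + 1)).1.2 ∧ (Ψ (n' + 1)).1.1 t ∈ FAv (bOf n')) ∧
      (∀ t, (Ψ n').1.2 < t → t ≤ (Ψ (n' + 1)).1.2 → (Ψ (n' + 1)).1.1 t ∉ FGv a) :=
    fun n' => (hstep (bOf n') (Ψ n')).choose_spec
  set πs : ℕ → ℕ → Q := fun n' => (Ψ n').1.1 with hπs
  set ks : ℕ → ℕ := fun n' => (Ψ n').1.2 with hks
  have hLs : ∀ n', πs n' ∈ Lstrat G q f := fun n' => (Ψ n').2.1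
  have kmono : Monotone ks := monotone_nat_of_le_succ (fun n' => le_of_lt (hΨs n').1)
  have kge : ∀ n', n' ≤ ks n' := by
    intro n'
    induction n' with
    | zero => exact Nat.zero_le _
    | succ n' ih => exact Nat.succ_le_of_lt (lt_of_le_of_lt ih (hΨs n').1)
  have stab : ∀ n' n'', n' ≤ n'' → ∀ j ≤ ks n', πs n'' j = πs n' j := by
    intro n' n'' h
    induction h with
    | refl => exact fun j _ => rfl
    | @step n₂ h₂ ih =>
        intro j hj
        exact ((hΨs n₂).2.1 j (hj.trans (kmono h₂))).trans (ih j hj)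
  let πI : ℕ → Q := fun j => πs j j
  have hlim : ∀ n' j, j ≤ ks n' → πI j = πs n' j := by
    intro n' j hj
    rcases le_or_gt n' j with h | h
    · exact stab n' j h j hj
    · exact (stab j n' (le_of_lt h) j (kge j)).symm
  have hπI : πI ∈ Lstrat G q f := by
    refine ⟨⟨?_, ?_⟩, ?_⟩
    · rw [hlim 0 0 (Nat.zero_le _)]
      exact hπ₀.1.1
    · intro j
      have hj1 : j ≤ ks (j + 1) := le_of_lt (lt_of_lt_of_le (Nat.lt_succ_self j) (kge (j + 1)))
      rw [hlim (j + 1) j hj1, hlim (j + 1) (j + 1) (kge (j + 1))]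
      exact (hLs (j + 1)).1.2 j
    · intro j hs
      have hj1 : j ≤ ks (j + 1) := le_of_lt (lt_of_lt_of_le (Nat.lt_succ_self j) (kge (j + 1)))
      have hs' : πs (j + 1) j ∈ G.sys := by
        rw [← hlim (j + 1) j hj1]
        exact hs
      rw [hlim (j + 1) (j + 1) (kge (j + 1)), (hLs (j + 1)).2 j hs']
      congr 1
      exact histUpTo_congr (fun i hi => (hlim (j + 1) i (hi.trans hj1)).symm)
  have hA : ∀ i, InfOft πI (FAv i) := by
    intro i N
    set n' := N * m + i.val with hn'
    have hbof : bOf n' = i := by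
      apply Fin.ext
      show (N * m + i.val) % m = i.val
      rw [Nat.add_comm, Nat.add_mul_mod_self_right]
      exact Nat.mod_eq_of_lt i.isLt
    have hn'N : N ≤ n' := by
      have : N ≤ N * m := Nat.le_mul_of_pos_right N hm
      omega
    obtain ⟨t, ht1, ht2, ht3⟩ := (hΨs n').2.2.1
    have hksr : ks n' ≤ t := ht1
    refine ⟨t, ?_, ?_⟩
    · have := kge n'
      omega
    · rw [hlim (n' + 1) t ht2]
      rw [hbof] at ht3
      exact ht3
  have hnG : ¬ InfOft πI (FGv a) := by
    intro hIO
    obtain ⟨t, htk, htFG⟩ := hIO (ks 0 + 1)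
    have hex : ∃ n', t ≤ ks (n' + 1) := ⟨t, le_of_lt (lt_of_lt_of_le (Nat.lt_succ_self t) (kge (t + 1)))⟩
    have hspec := Nat.find_spec hex
    have hlt : ks (Nat.find hex) < t := by
      rcases Nat.eq_zero_or_pos (Nat.find hex) with h0 | h0
      · rw [h0]
        omega
      · obtain ⟨n'', hn''⟩ := Nat.exists_eq_add_of_lt h0
        have := Nat.find_min hex (m := n'') (by omega)
        rw [hn'']
        simpa using this
    have := (hΨs (Nat.find hex)).2.2.2 t hlt hspec
    rw [hlim (Nat.find hex + 1) t hspec] at htFG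
    exact this htFG
  rcases hwin2 hπI with hmem | hmem
  · exact hmem ⟨hπI.1, hA⟩
  · exact hnG (hmem.2 a)

end Assembly
/-- vectorized Lemma 8: if `q ∈ Z̄^∞ = Q∖⟦φ₄ᵛ⟧` and the system
strategy `f¹` satisfies `∅ ≠ L_q(H,f¹) ⊆ L̄_q(H,𝓕_A) ∪ L_q(H,𝓕_G)`, then
`Pre(L_q(H,f¹)) ≠ Pre(L_q(H,f¹) ∩ L_q(H,𝓕_A))`, i.e. `f¹` is conflicting
from `q`. -/
theorem losing_state_conflicting_vec {Q : Type*} [Fintype Q] {n m : ℕ}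
    [NeZero n] [NeZero m] (G : GameGraph Q) (FAv : Fin m → Set Q)
    (FGv : Fin n → Set Q) (q : Q) (hq : q ∉ phi4vSem G FAv FGv)
    (f : List Q → Q) (hf : IsSysStrategy G f)
    (hwin : (Lstrat G q f).Nonempty ∧
      Lstrat G q f ⊆ (LGenBuchi G q FAv)ᶜ ∪ LGenBuchi G q FGv) :
    prefixes (Lstrat G q f) ≠ prefixes (Lstrat G q f ∩ LGenBuchi G q FAv) := by
  intro hPE
  apply hq
  have hS : ∀ a : Fin n, SR G q f ⊆ Yinf G q f FAv FGv a :=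
    fun a => SR_subset_Yinf G q f FAv FGv a hf hPE hwin.2
  have hqS : q ∈ SR G q f := by
    obtain ⟨π, hπ⟩ := hwin.1
    have h0 := mem_SR G q f hπ 0
    rw [hπ.1.1] at h0
    exact h0
  have ha₀ : (0 : ℕ) < n := Nat.pos_of_ne_zero (NeZero.ne n)
  refine Set.mem_iUnion.2 ⟨⟨0, ha₀⟩, ?_⟩
  show q ∈ gfpVec _ _
  exact Set.mem_biUnion (s := {V : Fin n → Set Q | ∀ a', V a' ⊆ _})
    (fun a' => hS a') hqS

end GR1
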